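/- Every element of G admits a minimal length representative word in the generators a, b, b⁻¹ of the form w = b^{ε₁}(ab)^{p₁}(ab⁻¹)^{q₁}(ab)^{p₂}(ab⁻¹)^{q₂}⋯(ab)^{p_k}(ab⁻¹)^{q_k}a^{ε₂}, with ε₁, ε₂ ∈ {-1,0,1}, where moreover all positive integers pᵢ, qᵢ (possibly p₁ or q_k being zero) are at most 7, with the only exceptions being the four words (ab)^8, (ba)^8, (b⁻¹a)^8 and (ab⁻¹)^8. -/

import Mathlib

/-!
Setup: the automorphism group `Aut(T₈)` of the rooted 8-regular tree, realized
as the group of *portraits*: an automorphism is determined by the permutation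
of `{1,…,8}` (here `Fin 8`) that it induces below each vertex (a finite word
over the alphabet).  Composition is written left-to-right: `p * q` acts by
first applying `p`, then `q` (this is the convention of the paper, where a
word `a b a b⁻¹ a` acts by applying `a` first).
-/

namespace T8

/-- The root permutation of the generator `a` : `(34)(67)(58)` on letters
`1,…,8`, written `0`-indexed on `Fin 8` as `(2 3)(5 6)(4 7)`. -/
def σa : Equiv.Perm (Fin 8) := Equiv.swap 2 3 * Equiv.swap 5 6 * Equiv.swap 4 7

/-- The root permutation of the generator `b` : `(123)(456)` on letters
`1,…,8`, written `0`-indexed on `Fin 8` as `(0 1 2)(3 4 5)`. -/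
def σb : Equiv.Perm (Fin 8) :=
  (Equiv.swap 0 1 * Equiv.swap 1 2) * (Equiv.swap 3 4 * Equiv.swap 4 5)

/-- An automorphism of the rooted `8`-regular tree, given by its portrait:
for each vertex `v` (a finite word over the `8`-letter alphabet), the
permutation induced on the letters just below `v`. -/
@[ext] structure Aut where
  val : List (Fin 8) → Equiv.Perm (Fin 8)

/-- The section (state) of a tree automorphism at a first-level vertex `i`. -/
def sect (p : Aut) (i : Fin 8) : Aut := ⟨fun v => p.val (i :: v)⟩

/-- The section of a tree automorphism at an arbitrary vertex (word) `v`. -/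
def sectWord (p : Aut) : List (Fin 8) → Aut
  | [] => p
  | i :: t => sectWord (sect p i) t

/-- The action of a tree automorphism on vertices:
`p (i·w) = (σ_p i) · (p_i w)` where `σ_p = p.val []` is the root permutation
and `p_i` is the section at `i`.  This is length- and prefix-preserving. -/
def act : Aut → List (Fin 8) → List (Fin 8)
  | _, [] => []
  | p, i :: t => p.val [] i :: act (sect p i) t

/-- The action of the inverse of a tree automorphism on vertices. -/
def actInv : Aut → List (Fin 8) → List (Fin 8)
  | _, [] => []
  | p, i :: t => (p.val [])⁻¹ i :: actInv (sect p ((p.val [])⁻¹ i)) t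

instance : One Aut := ⟨⟨fun _ => 1⟩⟩
instance : Mul Aut := ⟨fun p q => ⟨fun v => q.val (act p v) * p.val v⟩⟩
instance : Inv Aut := ⟨fun p => ⟨fun v => (p.val (actInv p v))⁻¹⟩⟩

@[simp] lemma one_val (v : List (Fin 8)) : (1 : Aut).val v = 1 := rfl
@[simp] lemma mul_val (p q : Aut) (v : List (Fin 8)) :
    (p * q).val v = q.val (act p v) * p.val v := rfl
@[simp] lemma inv_val (p : Aut) (v : List (Fin 8)) :
    (p⁻¹).val v = (p.val (actInv p v))⁻¹ := rfl

@[simp] lemma sect_one (i : Fin 8) : sect 1 i = 1 := rfl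

lemma sect_mul (p q : Aut) (i : Fin 8) :
    sect (p * q) i = sect p i * sect q (p.val [] i) := rfl

lemma sect_inv (p : Aut) (i : Fin 8) :
    sect p⁻¹ i = (sect p ((p.val [])⁻¹ i))⁻¹ := rfl

lemma act_one : ∀ v : List (Fin 8), act (1 : Aut) v = v
  | [] => rfl
  | i :: t => by
    show (1 : Equiv.Perm (Fin 8)) i :: act (sect 1 i) t = i :: t
    rw [sect_one, act_one t, Equiv.Perm.one_apply]

lemma act_mul : ∀ (v : List (Fin 8)) (p q : Aut),
    act (p * q) v = act q (act p v)
  | [], _, _ => rfl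
  | i :: t, p, q => by
    show (p * q).val [] i :: act (sect (p * q) i) t
        = act q (p.val [] i :: act (sect p i) t)
    rw [sect_mul, act_mul t]
    show (q.val (act p []) * p.val []) i :: _
        = q.val [] (p.val [] i) :: act (sect q (p.val [] i)) (act (sect p i) t)
    rfl

lemma act_inv : ∀ (v : List (Fin 8)) (p : Aut), act p⁻¹ v = actInv p v
  | [], _ => rfl
  | i :: t, p => by
    show (p⁻¹).val [] i :: act (sect p⁻¹ i) t
        = (p.val [])⁻¹ i :: actInv (sect p ((p.val [])⁻¹ i)) t
    rw [sect_inv, act_inv t]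
    rfl

lemma actInv_act : ∀ (v : List (Fin 8)) (p : Aut), actInv p (act p v) = v
  | [], _ => rfl
  | i :: t, p => by
    show (p.val [])⁻¹ (p.val [] i) ::
        actInv (sect p ((p.val [])⁻¹ (p.val [] i))) (act (sect p i) t) = i :: t
    rw [show (p.val [])⁻¹ (p.val [] i) = i from (p.val []).symm_apply_apply i, actInv_act t]

lemma act_actInv : ∀ (v : List (Fin 8)) (p : Aut), act p (actInv p v) = v
  | [], _ => rfl
  | i :: t, p => by
    show p.val [] ((p.val [])⁻¹ i) ::
        act (sect p ((p.val [])⁻¹ i)) (actInv (sect p ((p.val [])⁻¹ i)) t) = i :: t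
    rw [show p.val [] ((p.val [])⁻¹ i) = i from (p.val []).apply_symm_apply i, act_actInv t]

instance : Group Aut where
  mul_assoc p q r := by
    ext v i
    simp [mul_val, act_mul, mul_assoc]
  one_mul p := by
    ext v i
    simp [mul_val, act_one]
  mul_one p := by
    ext v i
    simp [mul_val]
  inv_mul_cancel p := by
    ext v i
    simp [mul_val, inv_val, act_inv, actInv_act]

/-- The portrait of the generator `a = ⟨a, 1, 1, 1, 1, 1, 1, 1⟩ (34)(67)(58)`:
root permutation `σa`, section `a` at the first letter, trivial sections
elsewhere. -/
def aval : List (Fin 8) → Equiv.Perm (Fin 8)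
  | [] => σa
  | i :: t => if i = 0 then aval t else 1

/-- The generator `a = ⟨a, 1, 1, 1, 1, 1, 1, 1⟩ (34)(67)(58)`. -/
def a : Aut := ⟨aval⟩

/-- The portraits of the generator `b` (for `tt`) and of `b⁻¹` (for `ff`):
`b = ⟨1, 1, 1, 1, 1, 1, b, b⁻¹⟩ (123)(456)` and
`b⁻¹ = ⟨1, 1, 1, 1, 1, 1, b⁻¹, b⟩ (132)(465)`. -/
def bval : Bool → List (Fin 8) → Equiv.Perm (Fin 8)
  | s, [] => if s then σb else σb⁻¹
  | s, i :: t => if i = 6 then bval s t else if i = 7 then bval (!s) t else 1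

/-- The generator `b = ⟨1, 1, 1, 1, 1, 1, b, b⁻¹⟩ (123)(456)`. -/
def b : Aut := ⟨bval true⟩

/-- Sanity: the first section of `a` is `a` itself. -/
lemma sect_a_zero : sect a 0 = a := rfl

/-- Sanity: the section of `b` at the letter `7` (index `6`) is `b` itself. -/
lemma sect_b_six : sect b 6 = b := rfl

/-- The group `G = ⟨a, b⟩ = ⟨a, b, b⁻¹⟩ ≤ Aut(T₈)` of the paper. -/
def G : Subgroup Aut := Subgroup.closure {a, b}

lemma a_mem : a ∈ G := Subgroup.subset_closure (Set.mem_insert _ _)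

lemma b_mem : b ∈ G := Subgroup.subset_closure (Set.mem_insert_of_mem _ rfl)

end T8

namespace T8

/-! Words in the generators `a`, `b`, `b⁻¹`. -/

/-- The three letters `a`, `b`, `b⁻¹`. -/
inductive Letter
  | A : Letter
  | B : Letter
  | Bi : Letter
deriving DecidableEq

/-- Evaluation of a letter in `Aut(T₈)`. -/
def evalLetter : Letter → Aut
  | .A => a
  | .B => b
  | .Bi => b⁻¹

/-- Evaluation of a word in `Aut(T₈)` (letters are composed left-to-right). -/
def evalWord (w : List Letter) : Aut := (w.map evalLetter).prod

/-- The ball of radius `n` in `G` with respect to the generating set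
`{a, b, b⁻¹}`: elements expressible by a word of length at most `n`. -/
def ball (n : ℕ) : Set Aut := {g | ∃ w : List Letter, evalWord w = g ∧ w.length ≤ n}

/-- The number of occurrences of the letter `a` in a word. -/
def aCount (w : List Letter) : ℕ := w.count .A

/-- The root permutation of a letter. -/
def letterRoot : Letter → Equiv.Perm (Fin 8)
  | .A => σa
  | .B => σb
  | .Bi => σb⁻¹

/-- The (syntactic) section of a letter at a first-level vertex, read off
from the defining wreath recursions of `a`, `b` and `b⁻¹`. -/
def letterSect : Letter → Fin 8 → List Letter
  | .A, i => if i = 0 then [.A] else []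
  | .B, i => if i = 6 then [.B] else if i = 7 then [.Bi] else []
  | .Bi, i => if i = 6 then [.Bi] else if i = 7 then [.B] else []

/-- The (syntactic) section of a word at a first-level vertex `i`, computed
by the wreath recursion (letters applied left-to-right). -/
def wordSect : List Letter → Fin 8 → List Letter
  | [], _ => []
  | x :: u, i => letterSect x i ++ wordSect u (letterRoot x i)

/-- The free product `(ℤ/2ℤ) ∗ (ℤ/3ℤ)`. -/
abbrev FP := Monoid.Coprod (Multiplicative (ZMod 2)) (Multiplicative (ZMod 3))

/-- Evaluation of a letter in the free product `(ℤ/2ℤ) ∗ (ℤ/3ℤ)`: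
`a` is the generator of `ℤ/2ℤ`, `b` a generator of `ℤ/3ℤ`. -/
def letterFP : Letter → FP
  | .A => Monoid.Coprod.inl (Multiplicative.ofAdd (1 : ZMod 2))
  | .B => Monoid.Coprod.inr (Multiplicative.ofAdd (1 : ZMod 3))
  | .Bi => Monoid.Coprod.inr (Multiplicative.ofAdd (2 : ZMod 3))

/-- Evaluation of a word in the free product `(ℤ/2ℤ) ∗ (ℤ/3ℤ)`. -/
def evalFP (w : List Letter) : FP := (w.map letterFP).prod

/-- The number of occurrences of the letter `a` in the free reduction of a
word, i.e. in the normal form of the corresponding element of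
`(ℤ/2ℤ) ∗ (ℤ/3ℤ)`: equivalently, the least number of `a`'s among all words
representing this element. -/
noncomputable def aLen (g : FP) : ℕ := sInf {n | ∃ u : List Letter, evalFP u = g ∧ aCount u = n}

/-- `powW u n` is the word `u^n`. -/
def powW (u : List Letter) (n : ℕ) : List Letter := (List.replicate n u).flatten

/-- The word `(ab)^p (ab⁻¹)^q`. -/
def blockW (pq : ℕ × ℕ) : List Letter := powW [.A, .B] pq.1 ++ powW [.A, .Bi] pq.2

/-- The word `b^{ε₁} (ab)^{p₁} (ab⁻¹)^{q₁} ⋯ (ab)^{p_k} (ab⁻¹)^{q_k} a^{ε₂}`,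
where `e₁ ∈ {[], [b], [b⁻¹]}` and `e₂ ∈ {[], [a]}` encode `b^{ε₁}` and
`a^{ε₂}`. -/
def formWord (e₁ : List Letter) (pqs : List (ℕ × ℕ)) (e₂ : List Letter) : List Letter :=
  e₁ ++ (pqs.map blockW).flatten ++ e₂

/-- All `pᵢ, qᵢ` are positive, except possibly `p₁` and `q_k`. -/
def InnerPos (pqs : List (ℕ × ℕ)) : Prop :=
  ∀ (k : ℕ) (hk : k < pqs.length),
    (k ≠ 0 → 1 ≤ (pqs.get ⟨k, hk⟩).1) ∧ (k + 1 ≠ pqs.length → 1 ≤ (pqs.get ⟨k, hk⟩).2)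

end T8

namespace T8

/-!
The generators satisfy `a² = b³ = 1` and `(ab)¹⁶ = 1`. The first two relations hold because the
relators form a finite set of portraits that is closed under taking sections and has trivial root
permutations; the third because `(ab)¹⁶` is trivial on the first level and all its first-level
sections cancel freely.

By the first two relations a geodesic word alternates between `a` and `b^{±1}`, so it parses as
`b^{ε₁}(ab)^{p₁}(ab⁻¹)^{q₁}⋯(ab)^{p_k}(ab⁻¹)^{q_k}a^{ε₂}`. If an exponent is at least `8`, the
word contains `(ab^{±1})⁸`, which equals `(b^{∓1}a)⁸` since `(ab^{±1})¹⁶ = 1`. A letter next to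
this factor then yields a shorter word, so the geodesic is `(ab^{±1})⁸` itself.
-/

theorem Aut.eq_one_of_forall_sect_mem {S : Set Aut} (root : ∀ p ∈ S, p.val [] = 1)
    (sect_mem : ∀ p ∈ S, ∀ i, sect p i ∈ S) {p : Aut} (hp : p ∈ S) : p = 1 := by
  apply Aut.ext
  funext v
  induction v generalizing p with
  | nil => exact root p hp
  | cons i v ih => exact ih (sect_mem p hp i)

theorem Aut.ext_root_sect {p q : Aut} (root : p.val [] = q.val [])
    (sect_eq : ∀ i, sect p i = sect q i) : p = q := by
  apply Aut.ext
  funext v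
  cases v with
  | nil => exact root
  | cons i v => exact congrArg (fun r : Aut => r.val v) (sect_eq i)

-- The portrait `⟨b⁻¹, b⟩(132)(465)` of `b⁻¹`, before it is known to be the inverse of `b`.
def c : Aut := ⟨bval false⟩

lemma sect_a (i : Fin 8) : sect a i = if i = 0 then a else 1 := by
  split_ifs with h
  · subst h; rfl
  · apply Aut.ext; funext v; exact if_neg h

lemma sect_b (i : Fin 8) : sect b i = if i = 6 then b else if i = 7 then c else 1 := by
  split_ifs with h h'
  · subst h; rfl
  · subst h'; rfl
  · apply Aut.ext; funext v; exact (if_neg h).trans (if_neg h')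

lemma sect_c (i : Fin 8) : sect c i = if i = 6 then c else if i = 7 then b else 1 := by
  split_ifs with h h'
  · subst h; rfl
  · subst h'; rfl
  · apply Aut.ext; funext v; exact (if_neg h).trans (if_neg h')

lemma relators_eq_one :
    ∀ p ∈ ({1, a * a, b * c, c * b, b * b * b, c * c * c} : Set Aut), p = 1 := by
  refine fun p hp => Aut.eq_one_of_forall_sect_mem ?_ ?_ hp
  · rintro p (rfl | rfl | rfl | rfl | rfl | rfl) <;> decide
  · rintro p (rfl | rfl | rfl | rfl | rfl | rfl) i <;> fin_cases i <;>
      simp +decide [sect_mul, sect_a, sect_b, sect_c]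

theorem a_mul_a : a * a = 1 := relators_eq_one _ (by simp)

theorem b_inv : b⁻¹ = c := inv_eq_of_mul_eq_one_right (relators_eq_one _ (by simp))

theorem b_mul_b : b * b = b⁻¹ := eq_inv_of_mul_eq_one_left (relators_eq_one _ (by simp))

@[simp] lemma evalLetter_A : evalLetter .A = a := rfl

@[simp] lemma evalWord_nil : evalWord [] = 1 := rfl

@[simp] lemma evalWord_cons (x : Letter) (w : List Letter) :
    evalWord (x :: w) = evalLetter x * evalWord w := List.prod_cons

@[simp] lemma evalWord_append (u v : List Letter) :
    evalWord (u ++ v) = evalWord u * evalWord v := by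
  simp [evalWord]

lemma root_evalLetter (x : Letter) : (evalLetter x).val [] = letterRoot x := by
  cases x
  · rfl
  · rfl
  · simp only [evalLetter, b_inv]; rfl

lemma sect_evalLetter (x : Letter) (i : Fin 8) :
    sect (evalLetter x) i = evalWord (letterSect x i) := by
  cases x <;> simp only [evalLetter, letterSect, b_inv, sect_a, sect_b, sect_c] <;>
    split_ifs <;> simp [evalLetter, b_inv]

lemma root_evalWord (w : List Letter) :
    (evalWord w).val [] = (w.map letterRoot).reverse.prod := by
  induction w with
  | nil => rfl
  | cons x w ih => simp [mul_val, act, ih, root_evalLetter]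

lemma sect_evalWord (w : List Letter) (i : Fin 8) :
    sect (evalWord w) i = evalWord (wordSect w i) := by
  induction w generalizing i with
  | nil => rfl
  | cons x w ih => simp [sect_mul, wordSect, sect_evalLetter, root_evalLetter, ih]

lemma powW_add (u : List Letter) (m n : ℕ) : powW u (m + n) = powW u m ++ powW u n := by
  simp only [powW, List.replicate_add, List.flatten_append]

lemma powW_succ (u : List Letter) (n : ℕ) : powW u (n + 1) = u ++ powW u n := rfl

lemma powW_succ' (u : List Letter) (n : ℕ) : powW u (n + 1) = powW u n ++ u := by
  rw [powW_add]
  simp [powW]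

lemma length_powW (u : List Letter) (n : ℕ) : (powW u n).length = n * u.length := by
  simp [powW, List.sum_replicate]

lemma evalWord_powW (u : List Letter) (n : ℕ) : evalWord (powW u n) = evalWord u ^ n := by
  induction n with
  | zero => rfl
  | succ n ih => rw [powW_succ, evalWord_append, ih, pow_succ']

lemma powW_prefix (u : List Letter) {m n : ℕ} (h : m ≤ n) : powW u m <+: powW u n := by
  obtain ⟨k, rfl⟩ := Nat.exists_eq_add_of_le h
  rw [powW_add]
  exact List.prefix_append _ _

set_option maxRecDepth 8000 in
theorem ab_pow_sixteen : (a * b) ^ 16 = 1 := by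
  have hsect : ∀ i, wordSect (powW [.A, .B] 16) i ∈
      [[.A, .Bi, .B, .A, .Bi, .B], [.Bi, .B, .A, .Bi, .B, .A], [.B, .A, .Bi, .B, .A, .Bi]] := by
    decide
  have hab : evalWord (powW [.A, .B] 16) = (a * b) ^ 16 := by simp [evalWord_powW, evalLetter]
  rw [← hab]
  refine Aut.ext_root_sect ?_ fun i => ?_
  · rw [root_evalWord]; decide
  · rw [sect_evalWord]
    obtain h | h | h : _ ∨ _ ∨ _ := by simpa using hsect i
    all_goals rw [h]; simp [evalLetter, ← mul_assoc, a_mul_a]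

def invLetter : Letter → Letter
  | .A => .A
  | .B => .Bi
  | .Bi => .B

lemma evalLetter_invLetter (x : Letter) : evalLetter (invLetter x) = (evalLetter x)⁻¹ := by
  cases x
  · exact (inv_eq_of_mul_eq_one_right a_mul_a).symm
  · rfl
  · exact (inv_inv b).symm

lemma eq_or_eq_invLetter {x y : Letter} (hx : x ≠ .A) (hy : y ≠ .A) :
    x = y ∨ x = invLetter y := by
  cases x <;> cases y <;> simp_all [invLetter]

lemma evalLetter_pow_three {y : Letter} (hy : y ≠ .A) : evalLetter y ^ 3 = 1 := by
  have hb : b ^ 3 = 1 := by rw [pow_three, b_mul_b, mul_inv_cancel]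
  cases y
  · exact absurd rfl hy
  · exact hb
  · rw [evalLetter, inv_pow, hb, inv_one]

lemma a_mul_evalLetter_pow_sixteen {y : Letter} (hy : y ≠ .A) :
    (a * evalLetter y) ^ 16 = 1 := by
  cases y
  · exact absurd rfl hy
  · exact ab_pow_sixteen
  · have ha : a⁻¹ = a := inv_eq_of_mul_eq_one_right a_mul_a
    have : a * b⁻¹ = (a * (a * b) * a⁻¹)⁻¹ := by
      rw [ha, ← mul_assoc, a_mul_a, one_mul, mul_inv_rev, ha]
    rw [evalLetter, this, inv_pow, conj_pow, ab_pow_sixteen, mul_one, mul_inv_cancel, inv_one]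

section GroupIdentities

variable {H : Type*} [Group H] {α β : H}

theorem pow_eq_inv_pow_of_pow_two_mul_eq_one {x : H} {n : ℕ} (h : x ^ (2 * n) = 1) :
    x ^ n = x⁻¹ ^ n := by
  rw [inv_pow, eq_inv_iff_mul_eq_one, ← pow_add, ← two_mul]
  exact h

theorem mul_pow_eight_eq (hα : α * α = 1) (hαβ : (α * β) ^ 16 = 1) :
    (α * β) ^ 8 = β⁻¹ * α * (β⁻¹ * α) ^ 7 := by
  rw [pow_eq_inv_pow_of_pow_two_mul_eq_one hαβ, mul_inv_rev, inv_eq_of_mul_eq_one_right hα,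
    pow_succ']

theorem mul_mul_pow_eight (hα : α * α = 1) (hαβ : (α * β) ^ 16 = 1) :
    β * (α * β) ^ 8 = α * (β⁻¹ * α) ^ 7 := by
  rw [mul_pow_eight_eq hα hαβ, ← mul_assoc, ← mul_assoc, mul_inv_cancel, one_mul]

theorem inv_mul_mul_pow_eight (hα : α * α = 1) (hβ : β ^ 3 = 1) (hαβ : (α * β) ^ 16 = 1) :
    β⁻¹ * (α * β) ^ 8 = β * α * (β⁻¹ * α) ^ 7 := by
  have : β⁻¹ * β⁻¹ = β := by
    rw [← mul_inv_rev, inv_eq_iff_mul_eq_one, ← pow_three', hβ]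
  rw [mul_pow_eight_eq hα hαβ, ← mul_assoc, ← mul_assoc, this]

theorem mul_pow_eight_mul (hα : α * α = 1) (hαβ : (α * β) ^ 16 = 1) :
    (α * β) ^ 8 * α = (β⁻¹ * α) ^ 7 * β⁻¹ := by
  rw [pow_eq_inv_pow_of_pow_two_mul_eq_one hαβ, mul_inv_rev, inv_eq_of_mul_eq_one_right hα,
    pow_succ, mul_assoc, mul_assoc, hα, mul_one]

end GroupIdentities

def IsGeodesic (w : List Letter) : Prop :=
  ∀ u : List Letter, evalWord u = evalWord w → w.length ≤ u.length

lemma exists_evalWord_eq_of_mem {g : Aut} (hg : g ∈ G) : ∃ w, evalWord w = g := by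
  induction hg using Subgroup.closure_induction'' with
  | mem x hx =>
    obtain rfl | rfl := hx
    · exact ⟨[.A], by simp⟩
    · exact ⟨[.B], by simp [evalLetter]⟩
  | inv_mem x hx =>
    obtain rfl | rfl := hx
    · exact ⟨[.A], by simp [inv_eq_of_mul_eq_one_right a_mul_a]⟩
    · exact ⟨[.Bi], by simp [evalLetter]⟩
  | one => exact ⟨[], rfl⟩
  | mul x y _ _ hx hy =>
    obtain ⟨u, rfl⟩ := hx
    obtain ⟨v, rfl⟩ := hy
    exact ⟨u ++ v, evalWord_append u v⟩

lemma exists_isGeodesic {g : Aut} (hg : g ∈ G) : ∃ w, evalWord w = g ∧ IsGeodesic w := by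
  obtain ⟨w, hw, hmin⟩ := (measure List.length).wf.has_min {w | evalWord w = g}
    (exists_evalWord_eq_of_mem hg)
  exact ⟨w, hw, fun u hu => not_lt.1 (hmin u (hu.trans hw))⟩

lemma IsGeodesic.infix {u w : List Letter} (hw : IsGeodesic w) (h : u <:+: w) :
    IsGeodesic u := by
  obtain ⟨s, t, rfl⟩ := h
  intro v hv
  have := hw (s ++ v ++ t) (by simp [hv])
  simp only [List.length_append] at this
  omega

lemma not_isGeodesic_of_evalWord_eq {u v : List Letter} (h : evalWord u = evalWord v)
    (hlt : v.length < u.length) : ¬ IsGeodesic u :=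
  fun hu => (hu v h.symm).not_gt hlt

def Alternate (x y : Letter) : Prop := x = .A ↔ y ≠ .A

lemma not_alternate {x y : Letter} (hx : x ≠ .A) (hy : y ≠ .A) : ¬ Alternate x y := by
  simp [Alternate, hx, hy]

lemma alternate_of_isGeodesic {x y : Letter} (h : IsGeodesic [x, y]) : Alternate x y := by
  have shorter : ∀ v : List Letter, evalWord [x, y] = evalWord v → v.length < 2 → False :=
    fun v hv hlt => not_isGeodesic_of_evalWord_eq hv hlt h
  cases x <;> cases y <;> simp only [Alternate] <;> try decide
  · exact (shorter [] (by simp [a_mul_a]) (by decide)).elim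
  · exact (shorter [.Bi] (by simp [evalLetter, b_mul_b]) (by decide)).elim
  · exact (shorter [] (by simp [evalLetter]) (by decide)).elim
  · exact (shorter [] (by simp [evalLetter]) (by decide)).elim
  · exact (shorter [.B] (by simp [evalLetter, ← mul_inv_rev, b_mul_b]) (by decide)).elim

lemma IsGeodesic.isChain {w : List Letter} (hw : IsGeodesic w) : w.IsChain Alternate :=
  List.isChain_iff_forall_rel_of_append_cons_cons.2 fun x y s t h =>
    alternate_of_isGeodesic (hw.infix ⟨s, t, by simp [h]⟩)

section PowEight

variable {y : Letter}

lemma not_isGeodesic_cons_powW (hy : y ≠ .A) (x : Letter) :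
    ¬ IsGeodesic (x :: powW [.A, y] 8) := by
  have hα := a_mul_a
  have hαβ := a_mul_evalLetter_pow_sixteen hy
  by_cases hx : x = .A
  · subst hx
    intro hw
    have : IsGeodesic [.A, .A] := hw.infix ⟨[], y :: powW [.A, y] 7, rfl⟩
    exact (by simp [Alternate] : ¬ Alternate .A .A) (alternate_of_isGeodesic this)
  obtain rfl | rfl := eq_or_eq_invLetter hx hy
  · refine not_isGeodesic_of_evalWord_eq (v := .A :: powW [invLetter x, .A] 7) ?_
      (by simp [length_powW])
    simpa [evalWord_powW, evalLetter_invLetter, ← mul_assoc] using mul_mul_pow_eight hα hαβ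
  · refine not_isGeodesic_of_evalWord_eq (v := y :: .A :: powW [invLetter y, .A] 7) ?_
      (by simp [length_powW])
    simpa [evalWord_powW, evalLetter_invLetter, ← mul_assoc] using
      inv_mul_mul_pow_eight hα (evalLetter_pow_three hy) hαβ

lemma not_isGeodesic_powW_append (hy : y ≠ .A) (x : Letter) :
    ¬ IsGeodesic (powW [.A, y] 8 ++ [x]) := by
  by_cases hx : x = .A
  · subst hx
    refine not_isGeodesic_of_evalWord_eq (v := powW [invLetter y, .A] 7 ++ [invLetter y]) ?_
      (by simp [length_powW])
    simpa [evalWord_powW, evalLetter_invLetter, ← mul_assoc] using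
      mul_pow_eight_mul a_mul_a (a_mul_evalLetter_pow_sixteen hy)
  · intro hw
    have : IsGeodesic [y, x] := hw.infix ⟨powW [.A, y] 7 ++ [.A], [], by simp [powW_succ']⟩
    exact not_alternate hy hx (alternate_of_isGeodesic this)

lemma IsGeodesic.eq_powW_of_infix (hy : y ≠ .A) {w : List Letter} (hw : IsGeodesic w)
    (h : powW [.A, y] 8 <:+: w) : w = powW [.A, y] 8 := by
  obtain ⟨s, t, rfl⟩ := h
  obtain rfl | ⟨s, x, rfl⟩ := s.eq_nil_or_concat
  · cases t with
    | nil => simp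
    | cons x t =>
      exact (not_isGeodesic_powW_append hy x (hw.infix ⟨[], t, by simp⟩)).elim
  · exact (not_isGeodesic_cons_powW hy x (hw.infix ⟨s, t, by simp⟩)).elim

end PowEight

def PosSeam (x y : ℕ × ℕ) : Prop := 1 ≤ x.2 ∧ 1 ≤ y.1

lemma innerPos_of_isChain {pqs : List (ℕ × ℕ)} (h : pqs.IsChain PosSeam) : InnerPos pqs := by
  intro k hk
  rw [List.isChain_iff_getElem] at h
  refine ⟨fun hk0 => ?_, fun hlen => (h k (by omega)).1⟩
  obtain ⟨i, rfl⟩ := Nat.exists_eq_succ_of_ne_zero hk0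
  exact (h i hk).2

def consAB : List (ℕ × ℕ) → List (ℕ × ℕ)
  | [] => [(1, 0)]
  | (p, q) :: r => (p + 1, q) :: r

def consABi : List (ℕ × ℕ) → List (ℕ × ℕ)
  | [] => [(0, 1)]
  | (0, q) :: r => (0, q + 1) :: r
  | pq :: r => (0, 1) :: pq :: r

lemma flatten_map_blockW_consAB (l : List (ℕ × ℕ)) :
    ((consAB l).map blockW).flatten = .A :: .B :: (l.map blockW).flatten := by
  rcases l with _ | ⟨⟨p, q⟩, r⟩ <;> rfl

lemma flatten_map_blockW_consABi (l : List (ℕ × ℕ)) :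
    ((consABi l).map blockW).flatten = .A :: .Bi :: (l.map blockW).flatten := by
  rcases l with _ | ⟨⟨_ | p, q⟩, r⟩ <;> rfl

lemma isChain_consAB {l : List (ℕ × ℕ)} (h : l.IsChain PosSeam) :
    (consAB l).IsChain PosSeam := by
  rcases l with _ | ⟨⟨p, q⟩, _ | ⟨y, r⟩⟩ <;> simp_all [consAB, PosSeam]

lemma isChain_consABi {l : List (ℕ × ℕ)} (h : l.IsChain PosSeam) :
    (consABi l).IsChain PosSeam := by
  rcases l with _ | ⟨⟨_ | p, q⟩, _ | ⟨y, r⟩⟩ <;> simp_all [consABi, PosSeam]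

-- The hypothesis says that `w` alternates and, if nonempty, starts with `a`.
theorem exists_blocks : ∀ w : List Letter, (.B :: w).IsChain Alternate →
    ∃ (pqs : List (ℕ × ℕ)) (e₂ : List Letter), (e₂ = [] ∨ e₂ = [.A]) ∧ pqs.IsChain PosSeam ∧
      w = (pqs.map blockW).flatten ++ e₂
  | [], _ => ⟨[], [], by simp⟩
  | [.A], _ => ⟨[], [.A], by simp⟩
  | .A :: .B :: w, h => by
    obtain ⟨pqs, e₂, he₂, hpqs, rfl⟩ := exists_blocks w h.tail.tail
    exact ⟨consAB pqs, e₂, he₂, isChain_consAB hpqs, by simp [flatten_map_blockW_consAB]⟩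
  | .A :: .Bi :: w, h => by
    obtain ⟨pqs, e₂, he₂, hpqs, rfl⟩ :=
      exists_blocks w (h.tail.tail.imp_head fun hy => by simpa [Alternate] using hy)
    exact ⟨consABi pqs, e₂, he₂, isChain_consABi hpqs, by simp [flatten_map_blockW_consABi]⟩
  | .A :: .A :: _, h | .B :: _, h | .Bi :: _, h => by simp [Alternate] at h

theorem exists_formWord {w : List Letter} (h : w.IsChain Alternate) :
    ∃ (e₁ : List Letter) (pqs : List (ℕ × ℕ)) (e₂ : List Letter),
      (e₁ = [] ∨ e₁ = [.B] ∨ e₁ = [.Bi]) ∧ (e₂ = [] ∨ e₂ = [.A]) ∧ pqs.IsChain PosSeam ∧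
      w = formWord e₁ pqs e₂ := by
  obtain ⟨e₁, w', he₁, rfl, hw'⟩ : ∃ e₁ w', (e₁ = [] ∨ e₁ = [.B] ∨ e₁ = [.Bi]) ∧
      w = e₁ ++ w' ∧ (.B :: w').IsChain Alternate := by
    rcases w with _ | ⟨_ | _ | _, t⟩
    · exact ⟨[], [], by simp⟩
    · exact ⟨[], _, Or.inl rfl, rfl, List.isChain_cons_cons.2 ⟨by simp [Alternate], h⟩⟩
    · exact ⟨[.B], t, by simp [h]⟩
    · exact ⟨[.Bi], t, by simp, rfl, h.imp_head fun hy => by simpa [Alternate] using hy⟩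
  obtain ⟨pqs, e₂, he₂, hpqs, rfl⟩ := exists_blocks w' hw'
  exact ⟨e₁, pqs, e₂, he₁, he₂, hpqs, by simp [formWord]⟩

lemma blockW_infix_formWord (e₁ e₂ : List Letter) {pqs : List (ℕ × ℕ)} {pq : ℕ × ℕ}
    (h : pq ∈ pqs) : blockW pq <:+: formWord e₁ pqs e₂ :=
  (List.infix_of_mem_flatten (List.mem_map_of_mem h)).trans (List.infix_append _ _ _)

/-- every element of `G` admits a minimal length representative
word in `a, b, b⁻¹` of the form
`b^{ε₁}(ab)^{p₁}(ab⁻¹)^{q₁}⋯(ab)^{p_k}(ab⁻¹)^{q_k}a^{ε₂}` with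
`ε₁, ε₂ ∈ {-1,0,1}`, where all the positive integers `pᵢ, qᵢ` (possibly `p₁`
or `q_k` being zero) are at most `7`, with the only exceptions being the four
words `(ab)^8`, `(ba)^8`, `(b⁻¹a)^8` and `(ab⁻¹)^8`. -/
theorem stmt_12 :
    ∀ g ∈ G, ∃ w : List Letter,
      evalWord w = g ∧
      (∀ u : List Letter, evalWord u = g → w.length ≤ u.length) ∧
      ((∃ (e₁ e₂ : List Letter) (pqs : List (ℕ × ℕ)),
          (e₁ = [] ∨ e₁ = [.B] ∨ e₁ = [.Bi]) ∧ (e₂ = [] ∨ e₂ = [.A]) ∧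
          (∀ pq ∈ pqs, pq.1 ≤ 7 ∧ pq.2 ≤ 7) ∧ InnerPos pqs ∧
          w = formWord e₁ pqs e₂) ∨
        w = powW [.A, .B] 8 ∨ w = powW [.B, .A] 8 ∨
        w = powW [.Bi, .A] 8 ∨ w = powW [.A, .Bi] 8) := by
  intro g hg
  obtain ⟨w, rfl, hw⟩ := exists_isGeodesic hg
  refine ⟨w, rfl, hw, ?_⟩
  obtain ⟨e₁, pqs, e₂, he₁, he₂, hpqs, hform⟩ := exists_formWord hw.isChain
  by_cases hbound : ∀ pq ∈ pqs, pq.1 ≤ 7 ∧ pq.2 ≤ 7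
  · exact .inl ⟨e₁, e₂, pqs, he₁, he₂, hbound, innerPos_of_isChain hpqs, hform⟩
  push Not at hbound
  obtain ⟨pq, hpq, hbig⟩ := hbound
  have hblock : blockW pq <:+: w := hform ▸ blockW_infix_formWord e₁ e₂ hpq
  rcases le_or_gt pq.1 7 with hp | hp
  · refine .inr (.inr (.inr (.inr (hw.eq_powW_of_infix (by decide) ?_))))
    exact ((powW_prefix _ (hbig hp)).isInfix.trans (List.suffix_append _ _).isInfix).trans hblock
  · refine .inr (.inl (hw.eq_powW_of_infix (by decide) ?_))
    exact ((powW_prefix _ hp).trans (List.prefix_append _ _)).isInfix.trans hblock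

end T8
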